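/- Let U be a nonempty finite set, let F = F(U ⊔ {v}) be the free group with free basis U ⊔ {v}, and let u ∈ ⟨U⟩. If an element w ∈ F lies in the subgroup ⟨U ∪ {v⁻¹uv}⟩ generated by the basis elements from U together with v⁻¹uv, then the stabilizer Stab(w) of w in Aut(F) is not a cyclic group. -/

import Mathlib

/-!
The stabilizer of `w` contains two independent automorphisms: the transvection `v ↦ c v` fixing
`U`, for some `1 ≠ c ∈ ⟨U⟩` commuting with `u` (it then fixes `U` and `v⁻¹uv`, hence `w`), and
the inner automorphism by some `z ≠ 1` commuting with `w`. A relation `(v ↦ c v)^m = (conj z)^n`,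
evaluated at `v` and pushed through the retraction killing `v`, gives `c^m = 1`, so `m = 0` as
free groups are torsion-free; then `z^n` is central, hence trivial since the rank is at least two,
so `n = 0`. In a cyclic group, however, any two elements satisfy a relation `g^m = h^n` with
`(m, n) ≠ (0, 0)`.
-/

namespace FreeGroup

variable {α : Type*}

theorem toWord_mk_singleton_mul [DecidableEq α] {e : α × Bool} {w : FreeGroup α}
    (h : IsReduced (e :: w.toWord)) : (mk [e] * w).toWord = e :: w.toWord := by
  rw [← mk_toWord (x := w), mul_mk, toWord_mk, List.singleton_append, h.reduce_eq, toWord_mk,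
    isReduced_toWord.reduce_eq]

theorem toWord_mul_mk_singleton [DecidableEq α] {e : α × Bool} {w : FreeGroup α}
    (h : IsReduced (w.toWord ++ [e])) : (w * mk [e]).toWord = w.toWord ++ [e] := by
  rw [← mk_toWord (x := w), mul_mk, toWord_mk, h.reduce_eq, toWord_mk,
    isReduced_toWord.reduce_eq]

theorem commute_mk_singleton {w : FreeGroup α} {c : α} (h : Commute w (of c)) :
    ∀ s : Bool, Commute w (mk [(c, s)])
  | true => h
  | false => by simpa [of, inv_mk, invRev] using h.inv_right

theorem eq_one_of_commute_of_ne {a b : α} (hab : a ≠ b) {w : FreeGroup α}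
    (ha : Commute w (of a)) (hb : Commute w (of b)) : w = 1 := by
  classical
  by_contra hw
  have hne : w.toWord ≠ [] := mt toWord_eq_nil_iff.mp hw
  obtain ⟨p, L, hpL⟩ := List.exists_cons_of_ne_nil hne
  obtain ⟨c, hc, hcp⟩ : ∃ c, Commute w (of c) ∧ c ≠ p.1 := by
    by_cases hap : a = p.1
    · exact ⟨b, hb, fun h => hab (hap.trans h.symm)⟩
    · exact ⟨a, ha, hap⟩
  -- `e` cancels neither against the first letter of `w` nor against its last letter
  set e : α × Bool := (c, (w.toWord.getLast hne).2)
  have hleft : (mk [e] * w).toWord = e :: w.toWord := by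
    refine toWord_mk_singleton_mul ?_
    rw [hpL, isReduced_cons_cons, ← hpL]
    exact ⟨fun h => absurd h hcp, isReduced_toWord⟩
  have hright : (w * mk [e]).toWord = w.toWord ++ [e] := by
    refine toWord_mul_mk_singleton (List.isChain_append.mpr ⟨isReduced_toWord, by simp, ?_⟩)
    simp [List.getLast?_eq_some_getLast hne, e]
  have hword : w.toWord ++ [e] = e :: w.toWord := by
    rw [← hright, ← hleft, (commute_mk_singleton hc e.2).eq]
  rw [hpL, List.cons_append, List.cons.injEq] at hword
  exact hcp (congrArg Prod.fst hword.1).symm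

end FreeGroup

theorem IsCyclic.exists_zpow_eq_zpow {G : Type*} [Group G] [IsCyclic G] (g h : G) :
    ∃ m n : ℤ, (m, n) ≠ (0, 0) ∧ g ^ m = h ^ n := by
  obtain ⟨t, ht⟩ := IsCyclic.exists_generator (α := G)
  obtain ⟨a, rfl⟩ := Subgroup.mem_zpowers_iff.mp (ht g)
  obtain ⟨b, rfl⟩ := Subgroup.mem_zpowers_iff.mp (ht h)
  by_cases hba : (b, a) = (0, 0)
  · obtain ⟨rfl, rfl⟩ := Prod.mk.inj hba
    exact ⟨1, 0, by simp, by simp⟩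
  · exact ⟨b, a, hba, by rw [← zpow_mul, ← zpow_mul, mul_comm]⟩

theorem Subgroup.not_isCyclic_of_forall_zpow_eq_zpow {G : Type*} [Group G] {H : Subgroup G}
    {g h : G} (hg : g ∈ H) (hh : h ∈ H) (hgh : ∀ m n : ℤ, g ^ m = h ^ n → m = 0 ∧ n = 0) :
    ¬ IsCyclic H := by
  intro
  obtain ⟨m, n, hmn, heq⟩ := IsCyclic.exists_zpow_eq_zpow (⟨g, hg⟩ : H) ⟨h, hh⟩
  obtain ⟨rfl, rfl⟩ := hgh m n (by simpa using congrArg Subtype.val heq)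
  exact hmn rfl

theorem exists_ne_one_commute {G : Type*} [Group G] [Nontrivial G] (g : G) :
    ∃ h ≠ 1, Commute h g := by
  by_cases hg : g = 1
  · obtain ⟨h, hh⟩ := exists_ne (1 : G)
    exact ⟨h, hh, hg ▸ Commute.one_right h⟩
  · exact ⟨g, hg, Commute.refl g⟩

theorem MonoidHom.apply_eq_self_of_mem_closure {G : Type*} [Group G] {φ : G →* G} {s : Set G}
    (h : ∀ x ∈ s, φ x = x) {g : G} (hg : g ∈ Subgroup.closure s) : φ g = g :=
  MonoidHom.eqOn_closure (g := MonoidHom.id G) h hg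

theorem MulAut.zpow_apply_eq_zpow_mul {G : Type*} [Group G] {φ : MulAut G} {c x : G}
    (hc : φ c = c) (hx : φ x = c * x) (n : ℤ) : (φ ^ n) x = c ^ n * x := by
  induction n using Int.induction_on with
  | zero => simp
  | succ n ih =>
    rw [← mul_self_zpow, MulAut.mul_apply, ih, map_mul, map_zpow, hc, hx, zpow_add_one, mul_assoc]
  | pred n ih =>
    apply φ.injective
    rw [← MulAut.mul_apply, mul_self_zpow, sub_add_cancel, ih, map_mul, map_zpow, hc, hx,
      ← mul_assoc, ← zpow_add_one, sub_add_cancel]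

namespace FreeGroup

variable {U : Type*}

def baseSubgroup (U : Type*) : Subgroup (FreeGroup (U ⊕ Unit)) :=
  Subgroup.closure (Set.range fun y : U => of (Sum.inl y))

instance [Nonempty U] : Nontrivial (baseSubgroup U) :=
  nontrivial_of_ne ⟨_, Subgroup.subset_closure ⟨Classical.arbitrary U, rfl⟩⟩ 1
    (by simp [Subtype.ext_iff])

def transvectionHom (c : FreeGroup (U ⊕ Unit)) : FreeGroup (U ⊕ Unit) →* FreeGroup (U ⊕ Unit) :=
  lift (Sum.elim (fun y => of (Sum.inl y)) fun _ => c * of (Sum.inr ()))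

@[simp]
theorem transvectionHom_inl (c : FreeGroup (U ⊕ Unit)) (y : U) :
    transvectionHom c (of (Sum.inl y)) = of (Sum.inl y) :=
  lift_apply_of

@[simp]
theorem transvectionHom_inr (c : FreeGroup (U ⊕ Unit)) :
    transvectionHom c (of (Sum.inr ())) = c * of (Sum.inr ()) :=
  lift_apply_of

theorem transvectionHom_apply_of_mem (c : FreeGroup (U ⊕ Unit)) {x : FreeGroup (U ⊕ Unit)}
    (hx : x ∈ baseSubgroup U) : transvectionHom c x = x :=
  MonoidHom.apply_eq_self_of_mem_closure (by rintro _ ⟨y, rfl⟩; simp) hx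

theorem transvectionHom_inv_comp {c : FreeGroup (U ⊕ Unit)} (hc : c ∈ baseSubgroup U) :
    (transvectionHom c⁻¹).comp (transvectionHom c) = MonoidHom.id _ := by
  refine ext_hom _ _ (Sum.rec (fun y => by simp) fun ⟨⟩ => ?_)
  simp [transvectionHom_apply_of_mem _ hc]

def transvection (c : baseSubgroup U) : MulAut (FreeGroup (U ⊕ Unit)) :=
  (transvectionHom (c : FreeGroup (U ⊕ Unit))).toMulEquiv (transvectionHom c⁻¹)
    (transvectionHom_inv_comp c.2) (by simpa using transvectionHom_inv_comp (inv_mem c.2))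

theorem transvection_apply (c : baseSubgroup U) (x : FreeGroup (U ⊕ Unit)) :
    transvection c x = transvectionHom c x :=
  rfl

theorem transvection_zpow_apply_inr (c : baseSubgroup U) (n : ℤ) :
    (transvection c ^ n) (of (Sum.inr ())) = (c : FreeGroup (U ⊕ Unit)) ^ n * of (Sum.inr ()) :=
  MulAut.zpow_apply_eq_zpow_mul (transvectionHom_apply_of_mem _ c.2) (transvectionHom_inr _) n

theorem transvection_mem_stabilizer {c : baseSubgroup U} {u w : FreeGroup (U ⊕ Unit)}
    (hu : u ∈ baseSubgroup U) (hcu : Commute (c : FreeGroup (U ⊕ Unit)) u)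
    (hw : w ∈ Subgroup.closure ((Set.range fun y : U => of (Sum.inl y)) ∪
      {(of (Sum.inr ()))⁻¹ * u * of (Sum.inr ())})) :
    transvection c ∈ MulAction.stabilizer (MulAut (FreeGroup (U ⊕ Unit))) w := by
  refine MonoidHom.apply_eq_self_of_mem_closure (φ := (transvection c).toMonoidHom) ?_ hw
  rintro _ (⟨y, rfl⟩ | rfl)
  · simp [transvection_apply]
  · simp only [MulEquiv.toMonoidHom_eq_coe, MonoidHom.coe_coe, transvection_apply, _root_.map_mul,
      _root_.map_inv, transvectionHom_inr, transvectionHom_apply_of_mem _ hu, mul_inv_rev, mul_assoc,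
      mul_right_inj]
    rw [← mul_assoc u, ← hcu.eq, mul_assoc, inv_mul_cancel_left]

def baseRetraction : FreeGroup (U ⊕ Unit) →* FreeGroup (U ⊕ Unit) :=
  lift (Sum.elim (fun y => of (Sum.inl y)) 1)

@[simp]
theorem baseRetraction_inr : baseRetraction (of (Sum.inr () : U ⊕ Unit)) = 1 :=
  lift_apply_of

theorem baseRetraction_apply_of_mem {x : FreeGroup (U ⊕ Unit)} (hx : x ∈ baseSubgroup U) :
    baseRetraction x = x :=
  MonoidHom.apply_eq_self_of_mem_closure (by rintro _ ⟨y, rfl⟩; exact lift_apply_of) hx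

theorem eq_zero_of_transvection_zpow_eq_conj_zpow [Nonempty U] {c : baseSubgroup U} (hc : c ≠ 1)
    {z : FreeGroup (U ⊕ Unit)} (hz : z ≠ 1) {m n : ℤ}
    (h : transvection c ^ m = MulAut.conj z ^ n) : m = 0 ∧ n = 0 := by
  have hv := DFunLike.congr_fun h (of (Sum.inr ()))
  rw [transvection_zpow_apply_inr, ← map_zpow, MulAut.conj_apply] at hv
  have hcm : (c : FreeGroup (U ⊕ Unit)) ^ m = 1 := by
    simpa [baseRetraction_apply_of_mem (zpow_mem c.2 m)] using congrArg baseRetraction hv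
  obtain rfl : m = 0 := (IsMulTorsionFree.zpow_eq_one_iff_right (by simpa using hc)).mp hcm
  have hcomm (x : FreeGroup (U ⊕ Unit)) : Commute (z ^ n) x := by
    have := DFunLike.congr_fun h x
    rwa [zpow_zero, ← map_zpow, MulAut.one_apply, MulAut.conj_apply, eq_comm,
      mul_inv_eq_iff_eq_mul] at this
  have hzn : z ^ n = 1 := eq_one_of_commute_of_ne (Sum.inl_ne_inr (a := Classical.arbitrary U))
    (hcomm _) (hcomm (of (Sum.inr ())))
  exact ⟨rfl, (IsMulTorsionFree.zpow_eq_one_iff_right hz).mp hzn⟩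

end FreeGroup

theorem statement2_general {U : Type} [Nonempty U]
    (u : FreeGroup (U ⊕ Unit))
    (hu : u ∈ Subgroup.closure (Set.range fun y : U => FreeGroup.of (Sum.inl y)))
    (w : FreeGroup (U ⊕ Unit))
    (hw : w ∈ Subgroup.closure
      ((Set.range fun y : U => FreeGroup.of (Sum.inl y)) ∪
        {(FreeGroup.of (Sum.inr ()))⁻¹ * u * FreeGroup.of (Sum.inr ())})) :
    ¬ IsCyclic (MulAction.stabilizer (MulAut (FreeGroup (U ⊕ Unit))) w) := by
  obtain ⟨c, hc, hcu⟩ := exists_ne_one_commute (⟨u, hu⟩ : FreeGroup.baseSubgroup U)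
  obtain ⟨z, hz, hzw⟩ := exists_ne_one_commute w
  have hconj : MulAut.conj z ∈ MulAction.stabilizer (MulAut (FreeGroup (U ⊕ Unit))) w := by
    rw [MulAction.mem_stabilizer_iff, MulAut.smul_def, MulAut.conj_apply, hzw.eq,
      mul_inv_cancel_right]
  exact Subgroup.not_isCyclic_of_forall_zpow_eq_zpow
    (FreeGroup.transvection_mem_stabilizer hu (hcu.map (FreeGroup.baseSubgroup U).subtype) hw)
    hconj fun _ _ => FreeGroup.eq_zero_of_transvection_zpow_eq_conj_zpow hc hz

/-- Let U be a nonempty finite set, let F = F(U ⊔ {v}) be the free group with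
free basis U ⊔ {v}, and let u ∈ ⟨U⟩. If an element w ∈ F lies in the subgroup
⟨U ∪ {v⁻¹uv}⟩, then the stabilizer of w in Aut(F) is not a cyclic group.
Here the extra basis element v is modeled as `Sum.inr ()` in `U ⊕ Unit`. -/
theorem statement2 {U : Type} [Finite U] [Nonempty U]
    (u : FreeGroup (U ⊕ Unit))
    (hu : u ∈ Subgroup.closure (Set.range fun y : U => FreeGroup.of (Sum.inl y)))
    (w : FreeGroup (U ⊕ Unit))
    (hw : w ∈ Subgroup.closure
      ((Set.range fun y : U => FreeGroup.of (Sum.inl y)) ∪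
        {(FreeGroup.of (Sum.inr ()))⁻¹ * u * FreeGroup.of (Sum.inr ())})) :
    ¬ IsCyclic (MulAction.stabilizer (MulAut (FreeGroup (U ⊕ Unit))) w) :=
  statement2_general u hu w hw
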